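/- arXiv:1305.4300 — 11 statements merged into one kernel-verified Lean document; each statement's English description precedes it below -/
import Mathlib

section
/- Let m, n ≥ 1, let A be a real m×n matrix and d ∈ ℝ^m. Define x₀(j) = min over i of (d(i) − A(i,j)) and Δ = (1/2)·max over i of (d(i) − (A ⊙ x₀)(i)). Then for every x ∈ ℝ^n the Chebyshev distance satisfies max over i of |(A ⊙ x)(i) − d(i)| ≥ Δ, and equality holds for the vector x given by x(j) = Δ + x₀(j). In other words, the minimum over all x ∈ ℝ^n of the Chebyshev distance from A ⊙ x to d equals Δ, attained at x = Δ + x₀. -/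
/-- Max-plus (tropical) matrix–vector product: `(A ⊙ x) i = max_j (A i j + x j)`. -/
noncomputable def mpMul {m n : ℕ} (A : Matrix (Fin m) (Fin n) ℝ) (x : Fin n → ℝ) :
    Fin m → ℝ :=
  fun i => ⨆ j, A i j + x j

/-- The principal vector `x₀ j = min_i (d i - A i j)`. -/
noncomputable def principal {m n : ℕ} (A : Matrix (Fin m) (Fin n) ℝ) (d : Fin m → ℝ) :
    Fin n → ℝ :=
  fun j => ⨅ i, d i - A i j

/-- The tropResidual `Δ = (1/2) · max_i (d i - (A ⊙ x₀) i)`. -/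
noncomputable def tropResidual {m n : ℕ} (A : Matrix (Fin m) (Fin n) ℝ) (d : Fin m → ℝ) : ℝ :=
  (1 / 2) * ⨆ i, (d i - mpMul A (principal A d) i)

/-- Chebyshev distance between two vectors. -/
noncomputable def chebDist {m : ℕ} (u v : Fin m → ℝ) : ℝ := ⨆ i, |u i - v i|

/-- `d` lies in the tropical span of the family `{a j : j ∈ I}`. -/
def InTropSpan {m n : ℕ} (a : Fin n → Fin m → ℝ) (I : Finset (Fin n)) (d : Fin m → ℝ) :
    Prop :=
  I.Nonempty ∧ ∃ x : Fin n → ℝ, ∀ i, d i = ⨆ j : I, (x j.1 + a j.1 i)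

/-- `{a j : j ∈ I}` is a minimal generating system for `d`. -/
def MinGen {m n : ℕ} (a : Fin n → Fin m → ℝ) (I : Finset (Fin n)) (d : Fin m → ℝ) : Prop :=
  InTropSpan a I d ∧ ∀ I' ⊂ I, ¬ InTropSpan a I' d

/-- Residual of `d` with respect to the subfamily `{a j : j ∈ I}`. -/
noncomputable def resOn {m n : ℕ} (a : Fin n → Fin m → ℝ) (I : Finset (Fin n))
    (d : Fin m → ℝ) : ℝ :=
  (1 / 2) * ⨆ k, (d k - ⨆ j : I, (a j.1 k + ⨅ i, (d i - a j.1 i)))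

lemma term_le_mpMul {m n : ℕ} (A : Matrix (Fin m) (Fin n) ℝ) (x : Fin n → ℝ) (i : Fin m)
    (j : Fin n) : A i j + x j ≤ mpMul A x i := by
  unfold mpMul
  exact le_ciSup ((Set.finite_range fun j => A i j + x j).bddAbove) j

lemma mpMul_le {m n : ℕ} [Nonempty (Fin n)] (A : Matrix (Fin m) (Fin n) ℝ) (x : Fin n → ℝ) (i : Fin m) (c : ℝ)
    (h : ∀ j, A i j + x j ≤ c) : mpMul A x i ≤ c := by
  unfold mpMul; exact ciSup_le h

lemma abs_le_chebDist {m : ℕ} (u v : Fin m → ℝ) (i : Fin m) : |u i - v i| ≤ chebDist u v := by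
  unfold chebDist
  exact le_ciSup ((Set.finite_range fun i => |u i - v i|).bddAbove) i

/-- the minimum Chebyshev distance from `A ⊙ x` to `d` equals the
tropResidual `Δ`, attained at `x = Δ + x₀`. -/
theorem stmt2 (m n : ℕ) (hm : 1 ≤ m) (hn : 1 ≤ n)
    (A : Matrix (Fin m) (Fin n) ℝ) (d : Fin m → ℝ) :
    (∀ x : Fin n → ℝ, tropResidual A d ≤ chebDist (mpMul A x) d) ∧
      chebDist (mpMul A (fun j => tropResidual A d + principal A d j)) d = tropResidual A d := by
  haveI : Nonempty (Fin m) := ⟨⟨0, by omega⟩⟩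
  haveI : Nonempty (Fin n) := ⟨⟨0, by omega⟩⟩
  have bddm : ∀ f : Fin m → ℝ, BddAbove (Set.range f) := fun f => (Set.finite_range f).bddAbove
  have bddn : ∀ f : Fin n → ℝ, BddAbove (Set.range f) := fun f => (Set.finite_range f).bddAbove
  have bddmb : ∀ f : Fin m → ℝ, BddBelow (Set.range f) := fun f => (Set.finite_range f).bddBelow
  set x₀ := principal A d with hx0
  set Δ := tropResidual A d with hΔ
  set r : Fin m → ℝ := fun i => d i - mpMul A x₀ i with hr
  -- basic facts
  have hx0le : ∀ i j, A i j + x₀ j ≤ d i := by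
    intro i j
    have : x₀ j ≤ d i - A i j := ciInf_le (bddmb _) i
    linarith
  have hmple : ∀ i, mpMul A x₀ i ≤ d i := fun i => ciSup_le (fun j => hx0le i j)
  have hr0 : ∀ i, 0 ≤ r i := fun i => sub_nonneg.mpr (hmple i)
  have hsupr : (⨆ i, r i) = 2 * Δ := by
    rw [hΔ, tropResidual]; ring_nf; rfl
  have hΔ0 : 0 ≤ Δ := by
    have : r (Classical.arbitrary _) ≤ ⨆ i, r i := le_ciSup (bddm _) _
    have h0 := hr0 (Classical.arbitrary (Fin m))
    rw [hsupr] at this; linarith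
  have hrle : ∀ i, r i ≤ 2 * Δ := fun i => hsupr ▸ le_ciSup (bddm _) i
  -- sup of r is attained
  obtain ⟨i₀, hi₀⟩ := Finite.exists_max r
  have hri₀ : r i₀ = 2 * Δ := by
    refine le_antisymm (hrle i₀) ?_
    rw [← hsupr]; exact ciSup_le hi₀
  constructor
  · -- lower bound
    intro x
    set ε := chebDist (mpMul A x) d with hε
    have habs : ∀ i, |mpMul A x i - d i| ≤ ε := fun i => abs_le_chebDist _ _ i
    have hub : ∀ i, mpMul A x i ≤ d i + ε := by
      intro i; have := abs_le.mp (habs i); linarith [this.2]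
    have hlb : ∀ i, d i - ε ≤ mpMul A x i := by
      intro i; have := abs_le.mp (habs i); linarith [this.1]
    have hxle : ∀ j, x j ≤ x₀ j + ε := by
      intro j
      have : x j - ε ≤ ⨅ i, d i - A i j := by
        refine le_ciInf fun i => ?_
        have h1 : A i j + x j ≤ mpMul A x i := term_le_mpMul A x i j
        have h2 := hub i
        linarith
      have : x j - ε ≤ x₀ j := this
      linarith
    have hmp : ∀ i, mpMul A x i ≤ mpMul A x₀ i + ε := by
      intro i
      refine mpMul_le A x i _ fun j => ?_
      have h1 : A i j + x₀ j ≤ mpMul A x₀ i := term_le_mpMul A x₀ i j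
      have := hxle j
      linarith
    have key : ∀ i, r i ≤ 2 * ε := by
      intro i
      have := hlb i
      have := hmp i
      simp only [hr]
      linarith
    have : (⨆ i, r i) ≤ 2 * ε := ciSup_le key
    rw [hsupr] at this
    linarith
  · -- equality at x = Δ + x₀
    have htrans : ∀ i, mpMul A (fun j => Δ + x₀ j) i = Δ + mpMul A x₀ i := by
      intro i
      refine le_antisymm (mpMul_le A _ i _ fun j => ?_) ?_
      · have : A i j + x₀ j ≤ mpMul A x₀ i := term_le_mpMul A x₀ i j
        linarith
      · obtain ⟨j₀, hj₀⟩ := Finite.exists_max (fun j => A i j + x₀ j)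
        have hatt : mpMul A x₀ i = A i j₀ + x₀ j₀ :=
          le_antisymm (mpMul_le A x₀ i _ hj₀) (term_le_mpMul A x₀ i j₀)
        have : A i j₀ + ((fun j => Δ + x₀ j) j₀) ≤ mpMul A (fun j => Δ + x₀ j) i :=
          term_le_mpMul A (fun j => Δ + x₀ j) i j₀
        calc Δ + mpMul A x₀ i = A i j₀ + (Δ + x₀ j₀) := by rw [hatt]; ring
          _ ≤ _ := this
    have habs : ∀ i, |mpMul A (fun j => Δ + x₀ j) i - d i| = |Δ - r i| := by
      intro i; rw [htrans i]; congr 1; simp [hr]; ring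
    refine le_antisymm (ciSup_le fun i => ?_) ?_
    · rw [habs i]
      have h1 := hr0 i
      have h2 := hrle i
      rw [abs_le]; constructor <;> linarith
    · have heq : |mpMul A (fun j => Δ + x₀ j) i₀ - d i₀| = Δ := by
        rw [habs i₀, hri₀, abs_of_nonpos (by linarith)]; ring
      calc Δ = |mpMul A (fun j => Δ + x₀ j) i₀ - d i₀| := heq.symm
        _ ≤ _ := abs_le_chebDist _ _ i₀
end

section
/- Let m, n ≥ 1, let A be a real m×n matrix and d ∈ ℝ^m. Define x₀(j) = min over i of (d(i) − A(i,j)) and Δ = (1/2)·max over i of (d(i) − (A ⊙ x₀)(i)). Then for every x ∈ ℝ^n satisfying A ⊙ x ≤ d componentwise, the Chebyshev distance satisfies max over i of |(A ⊙ x)(i) − d(i)| ≥ 2Δ, and equality holds at x = x₀. That is, the minimum Chebyshev distance from d to the set {A ⊙ x : x ∈ ℝ^n, A ⊙ x ≤ d} equals 2Δ, attained at x₀. -/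
/-- the minimum Chebyshev distance from `d` to the set
`{A ⊙ x : A ⊙ x ≤ d}` equals `2Δ`, attained at `x₀`. -/
theorem stmt3 (m n : ℕ) (hm : 1 ≤ m) (hn : 1 ≤ n)
    (A : Matrix (Fin m) (Fin n) ℝ) (d : Fin m → ℝ) :
    (∀ x : Fin n → ℝ, (∀ i, mpMul A x i ≤ d i) →
        2 * tropResidual A d ≤ chebDist (mpMul A x) d) ∧
      (∀ i, mpMul A (principal A d) i ≤ d i) ∧
      chebDist (mpMul A (principal A d)) d = 2 * tropResidual A d := by

  have hM : Nonempty (Fin m) := Fin.pos_iff_nonempty.mp hm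
  have hN : Nonempty (Fin n) := Fin.pos_iff_nonempty.mp hn
  have hbdd : ∀ (f : Fin n → ℝ), BddAbove (Set.range f) :=
    fun f => (Set.finite_range f).bddAbove
  have hbddm : ∀ (f : Fin m → ℝ), BddAbove (Set.range f) :=
    fun f => (Set.finite_range f).bddAbove
  have hbddb : ∀ (f : Fin m → ℝ), BddBelow (Set.range f) :=
    fun f => (Set.finite_range f).bddBelow
  -- x₀ feasibility
  have hx0 : ∀ i, mpMul A (principal A d) i ≤ d i := by
    intro i
    apply ciSup_le
    intro j
    have h1 : principal A d j ≤ d i - A i j := ciInf_le (hbddb _) i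
    linarith
  -- monotonicity and x ≤ x₀ for feasible x
  have key : ∀ x : Fin n → ℝ, (∀ i, mpMul A x i ≤ d i) →
      ∀ i, mpMul A x i ≤ mpMul A (principal A d) i := by
    intro x hx i
    apply ciSup_le
    intro j
    have hxj : x j ≤ principal A d j := by
      apply le_ciInf
      intro k
      have h1 : A k j + x j ≤ mpMul A x k := le_ciSup (f := fun j => A k j + x j) (hbdd _) j
      have := hx k
      linarith
    calc A i j + x j ≤ A i j + principal A d j := by linarith
      _ ≤ mpMul A (principal A d) i := le_ciSup (f := fun j => A i j + principal A d j) (hbdd _) j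
  -- 2Δ = sup (d i - mpMul A x₀ i)
  have h2Δ : 2 * tropResidual A d = ⨆ i, (d i - mpMul A (principal A d) i) := by
    unfold tropResidual; ring
  have heq : chebDist (mpMul A (principal A d)) d = 2 * tropResidual A d := by
    rw [h2Δ]
    unfold chebDist
    congr 1
    funext i
    rw [abs_of_nonpos (by have := hx0 i; linarith)]
    ring
  refine ⟨?_, hx0, heq⟩
  intro x hx
  rw [h2Δ]
  apply ciSup_le
  intro i
  have h1 : d i - mpMul A (principal A d) i ≤ d i - mpMul A x i := by
    have := key x hx i; linarith
  have h2 : d i - mpMul A x i = |mpMul A x i - d i| := by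
    rw [abs_of_nonpos (by have := hx i; linarith)]; ring
  calc d i - mpMul A (principal A d) i ≤ d i - mpMul A x i := h1
    _ = |mpMul A x i - d i| := h2
    _ ≤ chebDist (mpMul A x) d := le_ciSup (f := fun i => |mpMul A x i - d i|) (hbddm _) i
end

section
/- Let m, n ≥ 1, let A be a real m×n matrix and d ∈ ℝ^m, and let Δ = (1/2)·max over i of (d(i) − (A ⊙ x₀)(i)) where x₀(j) = min over i of (d(i) − A(i,j)). Then the max-plus linear equation A ⊙ x = d has a solution x ∈ ℝ^n if and only if Δ = 0. -/
/-- existence criterion for the max-plus equation `A ⊙ x = d`. -/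
theorem stmt5 (m n : ℕ) (hm : 1 ≤ m) (hn : 1 ≤ n)
    (A : Matrix (Fin m) (Fin n) ℝ) (d : Fin m → ℝ) :
    (∃ x : Fin n → ℝ, mpMul A x = d) ↔ tropResidual A d = 0 := by
  haveI : Nonempty (Fin m) := ⟨⟨0, hm⟩⟩
  haveI : Nonempty (Fin n) := ⟨⟨0, hn⟩⟩
  set x₀ := principal A d with hx0
  -- `mpMul A x₀ ≤ d` pointwise
  have hle : ∀ i, mpMul A x₀ i ≤ d i := by
    intro i
    apply ciSup_le
    intro j
    have h1 : x₀ j ≤ d i - A i j :=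
      ciInf_le (Set.finite_range _).bddBelow i
    linarith
  have key : (mpMul A x₀ = d) ↔ tropResidual A d = 0 := by
    constructor
    · intro h
      rw [tropResidual, ← hx0, h]
      simp
    · intro h
      have hsup : (⨆ i, (d i - mpMul A x₀ i)) = 0 := by
        have : (1 / 2 : ℝ) * ⨆ i, (d i - mpMul A x₀ i) = 0 := h
        linarith
      funext i
      have h2 : d i - mpMul A x₀ i ≤ 0 := by
        calc d i - mpMul A x₀ i ≤ ⨆ i, (d i - mpMul A x₀ i) :=
              le_ciSup (f := fun i => d i - mpMul A x₀ i)
                (Set.finite_range _).bddAbove i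
          _ = 0 := hsup
      have := hle i
      linarith
  constructor
  · rintro ⟨x, hx⟩
    rw [← key]
    -- `x ≤ x₀`
    have hxle : ∀ j, x j ≤ x₀ j := by
      intro j
      apply le_ciInf
      intro i
      have h1 : A i j + x j ≤ mpMul A x i :=
        le_ciSup (f := fun j => A i j + x j) (Set.finite_range _).bddAbove j
      rw [hx] at h1
      linarith
    funext i
    refine le_antisymm (hle i) ?_
    have : mpMul A x i ≤ mpMul A x₀ i := by
      apply ciSup_le
      intro j
      have h1 : A i j + x₀ j ≤ mpMul A x₀ i :=
        le_ciSup (f := fun j => A i j + x₀ j) (Set.finite_range _).bddAbove j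
      have := hxle j
      linarith
    rw [hx] at this
    exact this
  · intro h
    exact ⟨x₀, key.mpr h⟩
end

section
/- Let m, n ≥ 1, let A be a real m×n matrix and d ∈ ℝ^m, and let x₀(j) = min over i of (d(i) − A(i,j)). If the equation A ⊙ x = d has any solution x ∈ ℝ^n, then every solution x satisfies x ≤ x₀ componentwise and x₀ itself is a solution, i.e., A ⊙ x₀ = d; thus x₀ is the maximal solution. -/
/-- if `A ⊙ x = d` is solvable then `x₀` is its maximal solution. -/
theorem stmt6 (m n : ℕ) (hm : 1 ≤ m) (hn : 1 ≤ n)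
    (A : Matrix (Fin m) (Fin n) ℝ) (d : Fin m → ℝ)
    (hsol : ∃ x : Fin n → ℝ, mpMul A x = d) :
    (∀ x : Fin n → ℝ, mpMul A x = d → ∀ j, x j ≤ principal A d j) ∧
      mpMul A (principal A d) = d := by
  haveI : NeZero m := ⟨by omega⟩
  haveI : NeZero n := ⟨by omega⟩
  have hub : ∀ x : Fin n → ℝ, mpMul A x = d → ∀ j, x j ≤ principal A d j := by
    intro x hx j
    show x j ≤ ⨅ i, d i - A i j
    refine le_ciInf fun i => ?_
    have h1 : A i j + x j ≤ d i := by
      rw [← hx]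
      exact le_ciSup (Set.Finite.bddAbove (Set.finite_range fun j => A i j + x j)) j
    linarith
  refine ⟨hub, ?_⟩
  obtain ⟨x, hx⟩ := hsol
  funext i
  apply le_antisymm
  · refine ciSup_le fun j => ?_
    have : principal A d j ≤ d i - A i j :=
      ciInf_le (Set.Finite.bddBelow (Set.finite_range fun i => d i - A i j)) i
    linarith
  · conv_lhs => rw [← hx]
    refine ciSup_le fun j => ?_
    have h2 : x j ≤ principal A d j := hub x hx j
    have h3 : A i j + principal A d j ≤ ⨆ k, A i k + principal A d k :=
      le_ciSup (Set.Finite.bddAbove (Set.finite_range fun k => A i k + principal A d k)) j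
    show A i j + x j ≤ ⨆ k, A i k + principal A d k
    linarith
end

section
/- Let m, n ≥ 1, let A be a real m×n matrix with columns a₁, …, aₙ ∈ ℝ^m, and let d ∈ ℝ^m. Suppose the columns of A form a minimal generating system for d, i.e., d lies in the tropical span of {a₁, …, aₙ} but does not lie in the tropical span of {a_j : j ∈ J} for any proper subset J ⊊ {1, …, n}. Then the solution of the max-plus equation A ⊙ x = d is unique: if A ⊙ x = d and A ⊙ x' = d for x, x' ∈ ℝ^n, then x = x'. -/
lemma stmt7_aux (m n : ℕ) (hm : 1 ≤ m)
    (A : Matrix (Fin m) (Fin n) ℝ) (d : Fin m → ℝ)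
    (hmin : MinGen (fun j i => A i j) Finset.univ d)
    (x x' : Fin n → ℝ) (hx : mpMul A x = d) (hx' : mpMul A x' = d)
    (j : Fin n) (hlt : x j < x' j) : False := by
  haveI : Nonempty (Fin m) := ⟨⟨0, hm⟩⟩
  have hle : ∀ i k, A i k + x k ≤ d i := by
    intro i k
    have := congrFun hx i
    rw [mpMul] at this
    calc A i k + x k ≤ ⨆ k, A i k + x k :=
      le_ciSup (f := fun k => A i k + x k) (Set.Finite.bddAbove (Set.finite_range _)) k
    _ = d i := this
  have hle' : ∀ i k, A i k + x' k ≤ d i := by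
    intro i k
    have := congrFun hx' i
    rw [mpMul] at this
    calc A i k + x' k ≤ ⨆ k, A i k + x' k :=
      le_ciSup (f := fun k => A i k + x' k) (Set.Finite.bddAbove (Set.finite_range _)) k
    _ = d i := this
  haveI : Nonempty (Fin n) := ⟨j⟩
  have hattain : ∀ i, ∃ k, k ≠ j ∧ A i k + x k = d i := by
    intro i
    obtain ⟨k, hk⟩ := Finite.exists_max (fun k => A i k + x k)
    have hd : A i k + x k = d i := by
      have h1 : d i ≤ A i k + x k := by
        have := congrFun hx i
        rw [mpMul] at this
        rw [← this]
        exact ciSup_le hk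
      exact le_antisymm (hle i k) h1
    refine ⟨k, ?_, hd⟩
    intro hkj
    subst hkj
    have := hle' i k
    linarith
  set I' : Finset (Fin n) := Finset.univ.erase j with hI'
  obtain ⟨k0, hk0ne, _⟩ := hattain ⟨0, hm⟩
  have hk0mem : k0 ∈ I' := Finset.mem_erase.mpr ⟨hk0ne, Finset.mem_univ _⟩
  haveI : Nonempty I' := ⟨⟨k0, hk0mem⟩⟩
  refine hmin.2 I' (Finset.erase_ssubset (Finset.mem_univ j)) ⟨⟨k0, hk0mem⟩, x, ?_⟩
  intro i
  apply le_antisymm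
  · obtain ⟨k, hkne, hk⟩ := hattain i
    have hkmem : k ∈ I' := Finset.mem_erase.mpr ⟨hkne, Finset.mem_univ _⟩
    rw [← hk]
    have : A i k + x k = x k + A i k := by ring
    rw [this]
    exact le_ciSup (f := fun j' : I' => x j'.1 + A i j'.1)
      (Set.Finite.bddAbove (Set.finite_range _)) (⟨k, hkmem⟩ : I')
  · apply ciSup_le
    intro ⟨k, hk⟩
    have := hle i k
    simpa [add_comm] using this

/-- if the columns of `A` form a minimal generating system for `d`,
then the solution of `A ⊙ x = d` is unique. -/
theorem stmt7 (m n : ℕ) (hm : 1 ≤ m) (hn : 1 ≤ n)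
    (A : Matrix (Fin m) (Fin n) ℝ) (d : Fin m → ℝ)
    (hmin : MinGen (fun j i => A i j) Finset.univ d) :
    ∀ x x' : Fin n → ℝ, mpMul A x = d → mpMul A x' = d → x = x' := by
  intro x x' hx hx'
  funext j
  by_contra hne
  rcases lt_or_gt_of_ne hne with h | h
  · exact stmt7_aux m n hm A d hmin x x' hx hx' j h
  · exact stmt7_aux m n hm A d hmin x' x hx' hx j h
end

section
/- Let m ≥ 1, n ≥ 2, and let a₁, …, aₙ ∈ ℝ^m. For each index i, let A_i denote the matrix whose columns are the vectors a_j for j ≠ i, and let Δ_i = (1/2)·max over k of (a_i(k) − (A_i ⊙ x₀ⁱ)(k)) be the residual of a_i with respect to A_i, where x₀ⁱ(j) = min over k of (a_i(k) − a_j(k)) for j ≠ i. Then the system a₁, …, aₙ is tropically linearly independent (no a_i lies in the tropical span of the remaining vectors) if and only if δ(A) := min over i of Δ_i satisfies δ(A) > 0. -/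
lemma key {m n : ℕ} (hm : 1 ≤ m) (a : Fin n → Fin m → ℝ) (I : Finset (Fin n))
    (hI : I.Nonempty) (d : Fin m → ℝ) :
    ¬ InTropSpan a I d ↔ 0 < resOn a I d := by
  have hmne : Nonempty (Fin m) := ⟨⟨0, hm⟩⟩
  have hIne : Nonempty ↥I := hI.to_subtype
  set lam : Fin n → ℝ := fun j => ⨅ i, (d i - a j i) with hlam
  set s : Fin m → ℝ := fun k => ⨆ j : I, (a j.1 k + lam j.1) with hs
  have hsd : ∀ k, s k ≤ d k := by
    intro k
    refine ciSup_le fun j => ?_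
    have h1 : lam j.1 ≤ d k - a j.1 k := ciInf_le (Set.Finite.bddBelow (Set.finite_range _)) k
    linarith
  have hres : resOn a I d = (1 / 2) * ⨆ k, (d k - s k) := rfl
  have hSnn : 0 ≤ ⨆ k, (d k - s k) := by
    obtain ⟨k0⟩ := hmne
    have h1 : d k0 - s k0 ≤ ⨆ k, (d k - s k) :=
      le_ciSup (f := fun k => d k - s k) (Set.Finite.bddAbove (Set.finite_range _)) k0
    have := hsd k0
    linarith
  have hspan : InTropSpan a I d ↔ (⨆ k, (d k - s k)) = 0 := by
    constructor
    · rintro ⟨-, x, hx⟩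
      have hxlam : ∀ j : I, x j.1 ≤ lam j.1 := by
        intro j
        refine le_ciInf fun k => ?_
        have h1 : x j.1 + a j.1 k ≤ ⨆ j : I, (x j.1 + a j.1 k) :=
          le_ciSup (f := fun j : I => x j.1 + a j.1 k) (Set.Finite.bddAbove (Set.finite_range _)) j
        rw [← hx k] at h1
        linarith
      have hds : ∀ k, d k ≤ s k := by
        intro k
        rw [hx k]
        refine ciSup_le fun j => ?_
        have h2 : a j.1 k + lam j.1 ≤ s k :=
          le_ciSup (f := fun j : I => a j.1 k + lam j.1) (Set.Finite.bddAbove (Set.finite_range _)) j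
        have := hxlam j
        linarith
      have : ∀ k, d k - s k = 0 := fun k => by have := hds k; have := hsd k; linarith
      simp only [this]
      exact ciSup_const
    · intro hS
      refine ⟨hI, lam, fun k => ?_⟩
      have hle : d k - s k ≤ 0 := by
        have h1 : d k - s k ≤ ⨆ k, (d k - s k) :=
          le_ciSup (f := fun k => d k - s k) (Set.Finite.bddAbove (Set.finite_range _)) k
        rw [hS] at h1; exact h1
      have := hsd k
      have hdk : d k = s k := by linarith
      rw [hdk]
      exact iSup_congr fun j => by ring
  rw [hres]
  constructor
  · intro h
    have hne : (⨆ k, (d k - s k)) ≠ 0 := fun h0 => h (hspan.2 h0)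
    have : 0 < ⨆ k, (d k - s k) := lt_of_le_of_ne hSnn (Ne.symm hne)
    linarith
  · intro h hsp
    have := hspan.1 hsp
    rw [this] at h
    norm_num at h

/-- a system of vectors is tropically linearly independent iff
`δ(A) = min_i Δ_i > 0`, where `Δ_i` is the tropResidual of `a i` with respect to the
remaining vectors. -/
theorem stmt8 (m n : ℕ) (hm : 1 ≤ m) (hn : 2 ≤ n) (a : Fin n → Fin m → ℝ) :
    (∀ i, ¬ InTropSpan a (Finset.univ.erase i) (a i)) ↔
      0 < ⨅ i, resOn a (Finset.univ.erase i) (a i) := by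
  have hnne : Nonempty (Fin n) := ⟨⟨0, by omega⟩⟩
  have hIne : ∀ i : Fin n, (Finset.univ.erase i).Nonempty := by
    intro i
    rw [← Finset.card_pos, Finset.card_erase_of_mem (Finset.mem_univ i), Finset.card_univ,
      Fintype.card_fin]
    omega
  have hk : ∀ i : Fin n, (¬ InTropSpan a (Finset.univ.erase i) (a i)) ↔
      0 < resOn a (Finset.univ.erase i) (a i) := fun i => key hm a _ (hIne i) (a i)
  constructor
  · intro h
    obtain ⟨i0, hi0⟩ := Finite.exists_min (fun i => resOn a (Finset.univ.erase i) (a i))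
    have hinf : (⨅ i, resOn a (Finset.univ.erase i) (a i)) =
        resOn a (Finset.univ.erase i0) (a i0) := by
      refine le_antisymm (ciInf_le (Set.Finite.bddBelow (Set.finite_range _)) i0) ?_
      exact le_ciInf hi0
    rw [hinf]
    exact (hk i0).1 (h i0)
  · intro h i
    refine (hk i).2 (lt_of_lt_of_le h ?_)
    exact ciInf_le (Set.Finite.bddBelow (Set.finite_range _)) i
end

section
/- Let m, n ≥ 1, let A be a real m×n matrix with columns a₁, …, aₙ ∈ ℝ^m, let d ∈ ℝ^m, and let x₀(j) = min over i of (d(i) − A(i,j)). Let I ⊆ {1, …, n} be a nonempty subset such that d lies in the tropical span of {a_j : j ∈ I}. Then every vector x ∈ ℝ^n satisfying x(j) = x₀(j) for j ∈ I and x(j) ≤ x₀(j) for j ∉ I is a solution of A ⊙ x = d. -/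
/-- if `d` lies in the tropical span of the columns indexed by `I`,
then any `x` agreeing with `x₀` on `I` and below `x₀` off `I` solves `A ⊙ x = d`. -/
theorem stmt10 (m n : ℕ) (hm : 1 ≤ m) (hn : 1 ≤ n)
    (A : Matrix (Fin m) (Fin n) ℝ) (d : Fin m → ℝ)
    (I : Finset (Fin n)) (hI : I.Nonempty)
    (hspan : InTropSpan (fun j i => A i j) I d)
    (x : Fin n → ℝ)
    (hxI : ∀ j ∈ I, x j = principal A d j)
    (hxO : ∀ j ∉ I, x j ≤ principal A d j) :
    mpMul A x = d := by
  have hnn : Nonempty (Fin n) := ⟨⟨0, hn⟩⟩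
  have hmm : Nonempty (Fin m) := ⟨⟨0, hm⟩⟩
  have hIne : Nonempty I := hI.to_subtype
  obtain ⟨-, y, hy⟩ := hspan
  funext i
  simp only [mpMul]
  apply le_antisymm
  · apply ciSup_le
    intro j
    have hxle : x j ≤ principal A d j := by
      by_cases h : j ∈ I
      · exact (hxI j h).le
      · exact hxO j h
    have h2 : principal A d j ≤ d i - A i j := ciInf_le (Finite.bddBelow_range _) i
    linarith
  · rw [hy i]
    apply ciSup_le
    intro j
    have hyle : y j.1 ≤ principal A d j.1 := by
      apply le_ciInf
      intro k
      have h3 : y j.1 + A k j.1 ≤ d k := by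
        rw [hy k]
        exact le_ciSup (f := fun j : I => y j.1 + A k j.1) (Finite.bddAbove_range _) j
      linarith
    have hx : x j.1 = principal A d j.1 := hxI j.1 j.2
    calc y j.1 + A i j.1 ≤ A i j.1 + x j.1 := by rw [hx]; linarith
      _ ≤ ⨆ j, A i j + x j := le_ciSup (f := fun j => A i j + x j) (Finite.bddAbove_range _) j.1
end

section
/- Let m, n ≥ 1, let A be a real m×n matrix with columns a₁, …, aₙ ∈ ℝ^m, let d ∈ ℝ^m, and let x₀(j) = min over i of (d(i) − A(i,j)). If x ∈ ℝ^n satisfies A ⊙ x = d, then there exists a nonempty subset I ⊆ {1, …, n} such that {a_j : j ∈ I} is a minimal generating system for d, x(j) = x₀(j) for every j ∈ I, and x(j) ≤ x₀(j) for every j ∉ I. Hence the general solution of A ⊙ x = d is exactly the family of solutions described by minimal generating index sets I. -/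
/-- every solution of `A ⊙ x = d` arises from a minimal generating
index set `I`: it coincides with `x₀` on `I` and lies below `x₀` off `I`. -/
theorem stmt11 (m n : ℕ) (hm : 1 ≤ m) (hn : 1 ≤ n)
    (A : Matrix (Fin m) (Fin n) ℝ) (d : Fin m → ℝ)
    (x : Fin n → ℝ) (hx : mpMul A x = d) :
    ∃ I : Finset (Fin n), I.Nonempty ∧
      MinGen (fun j i => A i j) I d ∧
      (∀ j ∈ I, x j = principal A d j) ∧
      (∀ j ∉ I, x j ≤ principal A d j) := by
  classical
  haveI hne : Nonempty (Fin n) := ⟨⟨0, hn⟩⟩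
  haveI hme : Nonempty (Fin m) := ⟨⟨0, hm⟩⟩
  set x₀ : Fin n → ℝ := principal A d with hx₀def
  have hx' : ∀ i, (⨆ j, A i j + x j) = d i := fun i => congrFun hx i
  have hub : ∀ i j, A i j + x j ≤ d i := by
    intro i j
    rw [← hx' i]
    exact le_ciSup (Set.finite_range fun j => A i j + x j).bddAbove j
  have hx0le : ∀ j i, x₀ j ≤ d i - A i j := fun j i =>
    ciInf_le (Set.finite_range _).bddBelow i
  have hxle : ∀ j, x j ≤ x₀ j := fun j =>
    le_ciInf (fun i => by linarith [hub i j])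
  have hatt : ∀ i, ∃ j, d i = A i j + x j := by
    intro i
    obtain ⟨j₀, hj₀⟩ := Finite.exists_max (fun j => A i j + x j)
    refine ⟨j₀, le_antisymm ?_ (hub i j₀)⟩
    rw [← hx' i]; exact ciSup_le hj₀
  set I₀ : Finset (Fin n) := Finset.univ.filter (fun j => ∃ i, d i = A i j + x j) with hI₀def
  have heq : ∀ j ∈ I₀, x j = x₀ j := by
    intro j hj
    rw [hI₀def, Finset.mem_filter] at hj
    obtain ⟨i, hi⟩ := hj.2
    have h1 : x₀ j ≤ d i - A i j := hx0le j i
    have h2 : x j = d i - A i j := by linarith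
    linarith [hxle j]
  -- Generating predicate with coefficients x₀
  have key : ∀ (I : Finset (Fin n)) (_ : I.Nonempty) (y : Fin n → ℝ),
      (∀ i, d i = ⨆ j : I, (y j.1 + A i j.1)) →
      (∀ i, d i = ⨆ j : I, (x₀ j.1 + A i j.1)) := by
    intro I hI y hy i
    haveI : Nonempty {j // j ∈ I} := hI.to_subtype
    have hyle : ∀ j : I, y j.1 ≤ x₀ j.1 := by
      intro j
      refine le_ciInf (fun k => ?_)
      have : y j.1 + A k j.1 ≤ d k := by
        rw [hy k]
        exact le_ciSup (Set.finite_range fun j : I => y j.1 + A k j.1).bddAbove j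
      linarith
    refine le_antisymm ?_ (ciSup_le (fun j => by linarith [hx0le j.1 i]))
    calc d i = ⨆ j : I, (y j.1 + A i j.1) := hy i
      _ ≤ ⨆ j : I, (x₀ j.1 + A i j.1) :=
        ciSup_mono (Set.finite_range _).bddAbove (fun j => by linarith [hyle j])
  have hI₀ne : I₀.Nonempty := by
    obtain ⟨j, hj⟩ := hatt ⟨0, hm⟩
    exact ⟨j, by rw [hI₀def, Finset.mem_filter]; exact ⟨Finset.mem_univ _, ⟨0, hm⟩, hj⟩⟩
  have hI₀gen : ∀ i, d i = ⨆ j : I₀, (x₀ j.1 + A i j.1) := by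
    intro i
    haveI : Nonempty {j // j ∈ I₀} := hI₀ne.to_subtype
    obtain ⟨j, hj⟩ := hatt i
    have hjI : j ∈ I₀ := by rw [hI₀def, Finset.mem_filter]; exact ⟨Finset.mem_univ _, i, hj⟩
    refine le_antisymm ?_ (ciSup_le (fun k => by linarith [hx0le k.1 i]))
    have : d i = x₀ j + A i j := by rw [← heq j hjI]; linarith
    rw [this]
    exact le_ciSup (Set.finite_range fun j : I₀ => x₀ j.1 + A i j.1).bddAbove
      (⟨j, hjI⟩ : {j // j ∈ I₀})
  -- pick a minimal-cardinality good subset of I₀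
  set Q : Finset (Fin n) → Prop :=
    fun I => I ⊆ I₀ ∧ I.Nonempty ∧ ∀ i, d i = ⨆ j : I, (x₀ j.1 + A i j.1) with hQdef
  have hS : {k | ∃ I, Q I ∧ I.card = k}.Nonempty :=
    ⟨I₀.card, I₀, ⟨le_refl _, hI₀ne, hI₀gen⟩, rfl⟩
  obtain ⟨I, hQI, hcard⟩ := Nat.sInf_mem hS
  refine ⟨I, hQI.2.1, ⟨⟨hQI.2.1, x₀, hQI.2.2⟩, ?_⟩, fun j hj => heq j (hQI.1 hj),
    fun j _ => hxle j⟩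
  rintro I' hI' ⟨hI'ne, y, hy⟩
  have hgen' : ∀ i, d i = ⨆ j : I', (x₀ j.1 + A i j.1) := key I' hI'ne y hy
  have hQ' : Q I' := ⟨hI'.1.trans hQI.1, hI'ne, hgen'⟩
  have h1 : sInf {k | ∃ I, Q I ∧ I.card = k} ≤ I'.card := Nat.sInf_le ⟨I', hQ', rfl⟩
  have h2 : I'.card < I.card := Finset.card_lt_card hI'
  omega
end

section
/- Let m, n, p ≥ 1, let A be a real m×n matrix with columns a₁, …, aₙ, let C be a real p×n matrix with columns c₁, …, cₙ, and let d ∈ ℝ^m, b ∈ ℝ^p. Let I ⊆ {1, …, n} be a nonempty subset such that d lies in the tropical span of {a_j : j ∈ I} and, for every j ∈ I, max over k of (C(k,j) − b(k)) ≤ max over i of (A(i,j) − d(i)). Then every vector x ∈ ℝ^n with x(j) = min over i of (d(i) − A(i,j)) for j ∈ I and x(j) ≤ min( min over i of (d(i) − A(i,j)), min over k of (b(k) − C(k,j)) ) for j ∉ I satisfies both A ⊙ x = d and C ⊙ x ≤ b componentwise. -/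
/-- explicit solutions of the combined system `A ⊙ x = d`,
`C ⊙ x ≤ b`, built from a suitable generating index set `I`. -/
theorem stmt12 (m n p : ℕ) (hm : 1 ≤ m) (hn : 1 ≤ n) (hp : 1 ≤ p)
    (A : Matrix (Fin m) (Fin n) ℝ) (C : Matrix (Fin p) (Fin n) ℝ)
    (d : Fin m → ℝ) (b : Fin p → ℝ)
    (I : Finset (Fin n)) (hI : I.Nonempty)
    (hspan : InTropSpan (fun j i => A i j) I d)
    (hcond : ∀ j ∈ I, (⨆ k, C k j - b k) ≤ ⨆ i, A i j - d i)
    (x : Fin n → ℝ)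
    (hxI : ∀ j ∈ I, x j = ⨅ i, d i - A i j)
    (hxO : ∀ j ∉ I, x j ≤ min (⨅ i, d i - A i j) (⨅ k, b k - C k j)) :
    mpMul A x = d ∧ ∀ k, mpMul C x k ≤ b k := by
  have hm' : 0 < m := hm
  have hn' : 0 < n := hn
  have hp' : 0 < p := hp
  haveI : Nonempty (Fin m) := ⟨⟨0, hm'⟩⟩
  haveI : Nonempty (Fin n) := ⟨⟨0, hn'⟩⟩
  haveI : Nonempty (Fin p) := ⟨⟨0, hp'⟩⟩
  haveI : Nonempty I := ⟨⟨hI.choose, hI.choose_spec⟩⟩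
  obtain ⟨-, y, hy⟩ := hspan
  -- x j ≤ d i - A i j for all j, i
  have hxle : ∀ j i, x j ≤ d i - A i j := by
    intro j i
    by_cases hj : j ∈ I
    · rw [hxI j hj]
      exact ciInf_le (Set.Finite.bddBelow (Set.finite_range _)) i
    · exact le_trans (le_trans (hxO j hj) (min_le_left _ _))
        (ciInf_le (Set.Finite.bddBelow (Set.finite_range _)) i)
  have h1 : mpMul A x = d := by
    funext i
    apply le_antisymm
    · exact ciSup_le fun j => by linarith [hxle j i]
    · rw [hy i]
      apply ciSup_le
      rintro ⟨j, hj⟩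
      have hyx : y j ≤ x j := by
        rw [hxI j hj]
        apply le_ciInf
        intro i'
        have := (hy i').ge
        have h2 : y j + A i' j ≤ d i' :=
          le_trans (le_ciSup (f := fun j : I => y j.1 + A i' j.1) (Set.Finite.bddAbove (Set.finite_range _)) (⟨j, hj⟩ : I)) this
        linarith
      calc y j + A i j ≤ A i j + x j := by linarith
        _ ≤ mpMul A x i := le_ciSup (f := fun j => A i j + x j) (Set.Finite.bddAbove (Set.finite_range _)) j
  refine ⟨h1, fun k => ciSup_le fun j => ?_⟩
  by_cases hj : j ∈ I
  · obtain ⟨i₀, hi₀⟩ := Finite.exists_max (fun i => A i j - d i)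
    have hsup : (⨆ i, A i j - d i) = A i₀ j - d i₀ :=
      le_antisymm (ciSup_le hi₀) (le_ciSup (f := fun i => A i j - d i) (Set.Finite.bddAbove (Set.finite_range _)) i₀)
    have hC : C k j - b k ≤ A i₀ j - d i₀ := by
      calc C k j - b k ≤ ⨆ k', C k' j - b k' :=
            le_ciSup (f := fun k' => C k' j - b k') (Set.Finite.bddAbove (Set.finite_range _)) k
        _ ≤ ⨆ i, A i j - d i := hcond j hj
        _ = A i₀ j - d i₀ := hsup
    have := hxle j i₀
    linarith
  · have := le_trans (le_trans (hxO j hj) (min_le_right _ _))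
      (ciInf_le (Set.Finite.bddBelow (Set.finite_range _)) k)
    linarith
end

section
/- Let m, n, p ≥ 1, let A be a real m×n matrix with columns a₁, …, aₙ, let C be a real p×n matrix with columns c₁, …, cₙ, and let d ∈ ℝ^m, b ∈ ℝ^p. Then the combined system A ⊙ x = d and C ⊙ x ≤ b (componentwise) has a solution x ∈ ℝ^n if and only if there exists a nonempty subset I ⊆ {1, …, n} such that {a_j : j ∈ I} is a minimal generating system for d and, for every j ∈ I, max over k of (C(k,j) − b(k)) ≤ max over i of (A(i,j) − d(i)). -/
lemma le_rsup {ι : Type*} [Finite ι] (f : ι → ℝ) (i : ι) : f i ≤ ⨆ j, f j :=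
  le_ciSup (Set.Finite.bddAbove (Set.finite_range f)) i

lemma rsup_attained {ι : Type*} [Nonempty ι] [Finite ι] (f : ι → ℝ) :
    ∃ i, (⨆ j, f j) = f i := by
  obtain ⟨i, hi⟩ := Finite.exists_max f
  exact ⟨i, le_antisymm (ciSup_le hi) (le_rsup f i)⟩

lemma exists_minGen {m n : ℕ} (a : Fin n → Fin m → ℝ) (d : Fin m → ℝ) :
    ∀ J : Finset (Fin n), InTropSpan a J d → ∃ I, I ⊆ J ∧ MinGen a I d := by
  intro J
  induction J using Finset.strongInduction with
  | _ J ih =>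
    intro h
    by_cases hmin : ∀ I' ⊂ J, ¬ InTropSpan a I' d
    · exact ⟨J, subset_rfl, h, hmin⟩
    · push_neg at hmin
      obtain ⟨I', hsub, h'⟩ := hmin
      obtain ⟨I, hI, hmg⟩ := ih I' hsub h'
      exact ⟨I, hI.trans hsub.subset, hmg⟩

/-- solvability criterion for the combined system `A ⊙ x = d`,
`C ⊙ x ≤ b`. -/
theorem stmt13 (m n p : ℕ) (hm : 1 ≤ m) (hn : 1 ≤ n) (hp : 1 ≤ p)
    (A : Matrix (Fin m) (Fin n) ℝ) (C : Matrix (Fin p) (Fin n) ℝ)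
    (d : Fin m → ℝ) (b : Fin p → ℝ) :
    (∃ x : Fin n → ℝ, mpMul A x = d ∧ ∀ k, mpMul C x k ≤ b k) ↔
      (∃ I : Finset (Fin n), I.Nonempty ∧
        MinGen (fun j i => A i j) I d ∧
        ∀ j ∈ I, (⨆ k, C k j - b k) ≤ ⨆ i, A i j - d i) := by
  haveI : Nonempty (Fin m) := ⟨⟨0, hm⟩⟩
  haveI : Nonempty (Fin n) := ⟨⟨0, hn⟩⟩
  haveI : Nonempty (Fin p) := ⟨⟨0, hp⟩⟩
  classical
  constructor
  · rintro ⟨x, hA, hC⟩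
    have h1 : ∀ i j, A i j + x j ≤ d i := by
      intro i j
      have := le_rsup (fun j => A i j + x j) j
      rw [show (⨆ j, A i j + x j) = d i from congrFun hA i] at this
      exact this
    have h3 : ∀ k j, C k j + x j ≤ b k := by
      intro k j
      exact le_trans (le_rsup (fun j => C k j + x j) j) (hC k)
    set J : Finset (Fin n) := Finset.univ.filter (fun j => ∃ i, A i j + x j = d i) with hJ
    have h2 : ∀ i, ∃ j ∈ J, A i j + x j = d i := by
      intro i
      obtain ⟨j, hj⟩ := rsup_attained (fun j => A i j + x j)
      rw [show (⨆ j, A i j + x j) = d i from congrFun hA i] at hj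
      exact ⟨j, Finset.mem_filter.2 ⟨Finset.mem_univ _, ⟨i, hj.symm⟩⟩, hj.symm⟩
    have hJne : J.Nonempty := by
      obtain ⟨j, hj, _⟩ := h2 (Classical.arbitrary (Fin m))
      exact ⟨j, hj⟩
    haveI : Nonempty ↥J := hJne.to_subtype
    have hspan : InTropSpan (fun j i => A i j) J d := by
      refine ⟨hJne, x, fun i => ?_⟩
      apply le_antisymm
      · obtain ⟨j, hjJ, hj⟩ := h2 i
        calc d i = x j + A i j := by rw [← hj]; ring
        _ ≤ _ := le_rsup (fun j : J => x j.1 + A i j.1) ⟨j, hjJ⟩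
      · exact ciSup_le fun j => by
          have := h1 i j.1; linarith
    obtain ⟨I, hIJ, hmg⟩ := exists_minGen (fun j i => A i j) d J hspan
    refine ⟨I, hmg.1.1, hmg, fun j hjI => ?_⟩
    obtain ⟨i₀, hi₀⟩ := (Finset.mem_filter.1 (hIJ hjI)).2
    have hle : (⨆ k, C k j - b k) ≤ -x j := ciSup_le fun k => by
      have := h3 k j; linarith
    have : -x j = A i₀ j - d i₀ := by linarith
    exact hle.trans (this.le.trans (le_rsup (fun i => A i j - d i) i₀))
  · rintro ⟨I, hne, ⟨⟨_, x, hx⟩, _⟩, hcond⟩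
    haveI : Nonempty ↥I := hne.to_subtype
    have h1 : ∀ j ∈ I, ∀ i, x j + A i j ≤ d i := by
      intro j hj i
      rw [hx i]
      exact le_rsup (fun j : I => x j.1 + A i j.1) ⟨j, hj⟩
    set s : Fin n → ℝ := fun j => ⨆ i, A i j - d i with hs
    set t : Fin n → ℝ := fun j => ⨆ k, C k j - b k with ht
    set x' : Fin n → ℝ := fun j => if j ∈ I then x j else min (-(s j)) (-(t j)) with hx'
    have hsle : ∀ j ∈ I, s j ≤ -x j := by
      intro j hj
      exact ciSup_le fun i => by have := h1 j hj i; linarith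
    have ha : ∀ j i, A i j + x' j ≤ d i := by
      intro j i
      by_cases hj : j ∈ I
      · have := h1 j hj i
        simp only [hx', if_pos hj]; linarith
      · have h5 : A i j - d i ≤ s j := le_rsup (fun i => A i j - d i) i
        have : x' j ≤ -(s j) := by simp only [hx', if_neg hj]; exact min_le_left _ _
        linarith
    have hb : ∀ j k, C k j + x' j ≤ b k := by
      intro j k
      have h5 : C k j - b k ≤ t j := le_rsup (fun k => C k j - b k) k
      by_cases hj : j ∈ I
      · have h6 : t j ≤ s j := hcond j hj
        have h7 := hsle j hj
        simp only [hx', if_pos hj]; linarith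
      · have : x' j ≤ -(t j) := by simp only [hx', if_neg hj]; exact min_le_right _ _
        linarith
    refine ⟨x', funext fun i => ?_, fun k => ciSup_le fun j => hb j k⟩
    apply le_antisymm
    · exact ciSup_le fun j => ha j i
    · obtain ⟨j, hj⟩ := rsup_attained (fun j : I => x j.1 + A i j.1)
      have hd : d i = x j.1 + A i j.1 := (hx i).trans hj
      calc d i = A i j.1 + x' j.1 := by
            simp only [hx', if_pos j.2]; linarith
        _ ≤ _ := le_rsup (fun j => A i j + x' j) j.1
end

section
/- Let m, n ≥ 1, let A be a real m×n matrix, let b, d ∈ ℝ^m satisfy b ≤ d componentwise, and let x₀(j) = min over i of (d(i) − A(i,j)). Suppose I ⊆ {1, …, n} is a subset such that for every index k with b(k) < d(k) there exists j ∈ I with A(k,j) + x₀(j) = d(k). Then every vector x ∈ ℝ^n with x(j) = x₀(j) for j ∈ I and x(j) ≤ x₀(j) for j ∉ I satisfies the extended max-plus equation max((A ⊙ x)(i), b(i)) = d(i) for every i. -/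
/-- solutions of the extended equation `A ⊙ x ⊕ b = d` built from an
index set `I` covering all rows where `b i < d i`. -/
theorem stmt15 (m n : ℕ) (hm : 1 ≤ m) (hn : 1 ≤ n)
    (A : Matrix (Fin m) (Fin n) ℝ) (b d : Fin m → ℝ) (hbd : ∀ i, b i ≤ d i)
    (I : Finset (Fin n))
    (hcov : ∀ k, b k < d k → ∃ j ∈ I, A k j + principal A d j = d k)
    (x : Fin n → ℝ)
    (hxI : ∀ j ∈ I, x j = principal A d j)
    (hxO : ∀ j ∉ I, x j ≤ principal A d j) :
    ∀ i, max (mpMul A x i) (b i) = d i := by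
  have hne : Nonempty (Fin n) := Fin.pos_iff_nonempty.mp (by omega)
  have hnm : Nonempty (Fin m) := Fin.pos_iff_nonempty.mp (by omega)
  have hxle : ∀ j, x j ≤ principal A d j := by
    intro j
    by_cases hj : j ∈ I
    · exact le_of_eq (hxI j hj)
    · exact hxO j hj
  have hub : ∀ i, mpMul A x i ≤ d i := by
    intro i
    apply ciSup_le
    intro j
    have h1 : principal A d j ≤ d i - A i j :=
      ciInf_le (Set.Finite.bddBelow (Set.finite_range _)) i
    have := hxle j
    linarith
  intro i
  rcases lt_or_eq_of_le (hbd i) with hlt | heq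
  · obtain ⟨j, hjI, hj⟩ := hcov i hlt
    have hge : d i ≤ mpMul A x i := by
      rw [← hj, ← hxI j hjI]
      exact le_ciSup (f := fun j => A i j + x j)
        (Set.Finite.bddAbove (Set.finite_range _)) j
    exact le_antisymm (max_le (hub i) hlt.le) (hge.trans (le_max_left _ _))
  · exact le_antisymm (max_le (hub i) (hbd i)) (heq ▸ le_max_right _ _)
end
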